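/- A contest success function on N satisfies strict monotonicity (SM), Luce's choice axiom (LCA), dummy consistency (DC), and no advantageous reallocation (NAR) if and only if it is the ratio CSF: for every subset M ⊆ N with |M| ≥ 2, every i ∈ M, and every effort vector x^M ∈ ℝ_+^M \ {0}, p_i^M(x^M) = x_i / Σ_{j∈M} x_j. -/
import Mathlib


open Finset

/-- A joint effort vector: componentwise nonnegative, and active on `M`. -/
def FeasibleOn {N : Type*} (M : Finset N) (x : N → ℝ) : Prop :=
  (∀ i, 0 ≤ x i) ∧ ∃ i ∈ M, x i ≠ 0

/-- A feasible effort vector for the full contest: `x ∈ ℝ₊^N \ {0}`. -/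
def Feasible {N : Type*} (x : N → ℝ) : Prop :=
  (∀ i, 0 ≤ x i) ∧ ∃ i, x i ≠ 0

/-- A contest success function (CSF) on contestant set `N`: for every `M ⊆ N` with
`|M| ≥ 2`, a family of functions `p M · i` for `i ∈ M`, valued in `[0,1]`, depending
only on the coordinates in `M`, and summing to one over `M`. -/
structure CSF (N : Type*) where
  p : Finset N → (N → ℝ) → N → ℝ
  restrict : ∀ M : Finset N, 2 ≤ M.card → ∀ x y : N → ℝ, FeasibleOn M x →
    (∀ i ∈ M, x i = y i) → ∀ i ∈ M, p M x i = p M y i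
  nonneg : ∀ M : Finset N, 2 ≤ M.card → ∀ x, FeasibleOn M x → ∀ i ∈ M, 0 ≤ p M x i
  le_one : ∀ M : Finset N, 2 ≤ M.card → ∀ x, FeasibleOn M x → ∀ i ∈ M, p M x i ≤ 1
  sum_eq_one : ∀ M : Finset N, 2 ≤ M.card → ∀ x, FeasibleOn M x → ∑ i ∈ M, p M x i = 1

namespace CSF

variable {N : Type*} [Fintype N] [DecidableEq N]

/-- Winning probability in the full contest. -/
def P (c : CSF N) (x : N → ℝ) (i : N) : ℝ := c.p Finset.univ x i

/-- Strict monotonicity (SM). -/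
def SM (c : CSF N) : Prop :=
  ∀ x, Feasible x → ∀ i : N, c.P x i < 1 → ∀ xi' : ℝ, x i < xi' →
    c.P x i < c.P (Function.update x i xi') i

/-- Luce's choice axiom (LCA). -/
def LCA (c : CSF N) : Prop :=
  ∀ x, Feasible x → ∀ M : Finset N, 2 ≤ M.card → (∃ i ∈ M, x i ≠ 0) →
    ∀ i ∈ M, c.P x i = c.p M x i * ∑ j ∈ M, c.P x j

/-- Deviation `d_{ij}(x)`: the externality of `i`'s activity on `j`'s allocation. -/
noncomputable def dev (c : CSF N) (x : N → ℝ) (i j : N) : ℝ :=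
  (c.P (Function.update x i 0) j - c.P x j) / c.P (Function.update x i 0) j

/-- Homogeneous relative externality (HRE). -/
def HRE (c : CSF N) : Prop :=
  ∀ x, Feasible x → ∀ i j : N, i ≠ j → 0 < x i → 0 < x j → ∀ l : ℝ, 0 < l →
    0 < c.P (Function.update x i 0) j → 0 < c.P (Function.update x j 0) i →
    0 < c.P (Function.update (fun k => l * x k) i 0) j →
    0 < c.P (Function.update (fun k => l * x k) j 0) i →
    c.dev x j i ≠ 0 → c.dev (fun k => l * x k) j i ≠ 0 →
    c.dev x i j / c.dev x j i
      = c.dev (fun k => l * x k) i j / c.dev (fun k => l * x k) j i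

/-- Relative homogeneity (RH). -/
def RH (c : CSF N) : Prop :=
  ∀ x, Feasible x → ∀ i j : N, 0 < x i → 0 < x j → ∀ l : ℝ, 0 < l →
    c.P x i / c.P x j = c.P (fun k => l * x k) i / c.P (fun k => l * x k) j

/-- Homogeneity (HOM). -/
def HOM (c : CSF N) : Prop :=
  ∀ x, Feasible x → ∀ i : N, ∀ l : ℝ, 0 < l → c.P (fun k => l * x k) i = c.P x i

/-- Anonymity (ANY). -/
def ANY (c : CSF N) : Prop :=
  ∀ π : Equiv.Perm N, ∀ x, Feasible x → ∀ i : N,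
    c.P (fun k => x (π.symm k)) (π i) = c.P x i

/-- No advantageous reallocation (NAR). -/
def NAR (c : CSF N) : Prop :=
  ∀ x, Feasible x → ∀ i j : N, i ≠ j → ∀ xi' xj' : ℝ, 0 ≤ xi' → 0 ≤ xj' →
    xi' + xj' = x i + x j → ∀ k : N, k ≠ i → k ≠ j →
    c.P (Function.update (Function.update x i xi') j xj') k = c.P x k

/-- Dummy consistency (DC). -/
def DC (c : CSF N) : Prop :=
  ∀ x, Feasible x → ∀ i : N, x i = 0 → ∀ j : N, j ≠ i →
    c.P x j = c.p (Finset.univ.erase i) x j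

/-- Clark–Riis independence (CRI). -/
def CRI (c : CSF N) : Prop :=
  ∀ x, Feasible x → ∀ i j : N, i ≠ j → c.P x j < 1 →
    c.P (Function.update x j 0) i = c.P x i / (1 - c.P x j)

/-- Split-proofness (SP). -/
def SP (c : CSF N) : Prop :=
  ∀ x, Feasible x → ∀ i j : N, i ≠ j →
    c.P x i + c.P x j ≤ c.p (Finset.univ.erase j) (Function.update x i (x i + x j)) i

/-- Collusion-proofness (CP). -/
def CP (c : CSF N) : Prop :=
  ∀ x, Feasible x → ∀ i j : N, i ≠ j →
    c.p (Finset.univ.erase j) (Function.update x i (x i + x j)) i ≤ c.P x i + c.P x j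

end CSF

section Aux

set_option linter.unusedSectionVars false

variable {N : Type*} [Fintype N] [DecidableEq N]

lemma aux_feasible_of_pos_sum {x : N → ℝ} (h0 : ∀ i, 0 ≤ x i) (hs : 0 < ∑ i, x i) :
    Feasible x := by
  refine ⟨h0, ?_⟩
  by_contra h
  push_neg at h
  simp [h] at hs

lemma aux_feasibleOn_univ {x : N → ℝ} (hx : Feasible x) : FeasibleOn Finset.univ x :=
  ⟨hx.1, hx.2.imp fun i h => ⟨Finset.mem_univ i, h⟩⟩

lemma aux_card_univ (hN : 3 ≤ Fintype.card N) : 2 ≤ (Finset.univ : Finset N).card := by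
  rw [Finset.card_univ]; omega

/-- sum of full-contest probabilities is one. -/
lemma aux_sumP (hN : 3 ≤ Fintype.card N) (c : CSF N) {x : N → ℝ} (hx : Feasible x) :
    ∑ i, c.P x i = 1 :=
  c.sum_eq_one Finset.univ (aux_card_univ hN) x (aux_feasibleOn_univ hx)

lemma aux_P_nonneg (hN : 3 ≤ Fintype.card N) (c : CSF N) {x : N → ℝ} (hx : Feasible x)
    (i : N) : 0 ≤ c.P x i :=
  c.nonneg Finset.univ (aux_card_univ hN) x (aux_feasibleOn_univ hx) i (Finset.mem_univ i)

/-- Lemma A: dummies win with probability zero (from DC). -/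
lemma aux_dummy (hN : 3 ≤ Fintype.card N) (c : CSF N) (hDC : c.DC)
    {x : N → ℝ} (hx : Feasible x) {i : N} (hi : x i = 0) : c.P x i = 0 := by
  obtain ⟨j₀, hj₀⟩ := hx.2
  have hj₀i : j₀ ≠ i := by rintro rfl; exact hj₀ hi
  have hcard : 2 ≤ (Finset.univ.erase i).card := by
    rw [Finset.card_erase_of_mem (Finset.mem_univ i), Finset.card_univ]; omega
  have hfeas : FeasibleOn (Finset.univ.erase i) x :=
    ⟨hx.1, ⟨j₀, Finset.mem_erase.2 ⟨hj₀i, Finset.mem_univ j₀⟩, hj₀⟩⟩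
  have h1 : ∑ j ∈ Finset.univ.erase i, c.p (Finset.univ.erase i) x j = 1 :=
    c.sum_eq_one _ hcard x hfeas
  have h2 : ∑ j ∈ Finset.univ.erase i, c.P x j = 1 := by
    rw [← h1]
    refine Finset.sum_congr rfl fun j hj => ?_
    exact hDC x hx i hi j (Finset.mem_erase.1 hj).1
  have h3 := aux_sumP hN c hx
  rw [← Finset.add_sum_erase _ _ (Finset.mem_univ i)] at h3
  linarith

/-- A monotone additive function on `[0,S]` with `f S = 1` is linear. -/
lemma aux_linear {S : ℝ} (hS : 0 < S) (f : ℝ → ℝ)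
    (h0 : ∀ a, 0 ≤ a → a ≤ S → 0 ≤ f a)
    (hadd : ∀ a b, 0 ≤ a → 0 ≤ b → a + b ≤ S → f (a + b) = f a + f b)
    (hfS : f S = 1) :
    ∀ a, 0 ≤ a → a ≤ S → f a = a / S := by
  have hmono : ∀ a b, 0 ≤ a → a ≤ b → b ≤ S → f a ≤ f b := by
    intro a b ha hab hbS
    have h := hadd a (b - a) ha (by linarith) (by linarith)
    have h0' := h0 (b - a) (by linarith) (by linarith)
    have : f b = f a + f (b - a) := by rw [← h]; ring_nf
    linarith
  have hf0 : f 0 = 0 := by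
    have := hadd 0 0 le_rfl le_rfl (by linarith)
    simp at this; linarith
  have hnsmul : ∀ n : ℕ, ∀ t, 0 ≤ t → (n : ℝ) * t ≤ S → f ((n : ℝ) * t) = n * f t := by
    intro n
    induction n with
    | zero => intro t _ _; simpa using hf0
    | succ n ih =>
      intro t ht hnt
      have hnt' : (n : ℝ) * t ≤ S := by
        have : (n : ℝ) * t ≤ (n + 1 : ℝ) * t := by nlinarith
        push_cast at hnt ⊢; linarith
      have h1 : ((n : ℝ) + 1) * t = (n : ℝ) * t + t := by ring
      have := hadd ((n : ℝ) * t) t (by positivity) ht (by push_cast at hnt ⊢; linarith)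
      push_cast
      rw [h1, this, ih t ht hnt']
      ring
  have hrat : ∀ q : ℚ, 0 ≤ q → q ≤ 1 → f ((q : ℝ) * S) = q := by
    intro q hq0 hq1
    set n := q.den with hn
    set m := q.num.toNat with hm
    have hden : 0 < (n : ℝ) := by positivity
    have hqcast : (q : ℝ) = (m : ℝ) / (n : ℝ) := by
      rw [Rat.cast_def]
      congr 1
      exact_mod_cast (Int.toNat_of_nonneg (Rat.num_nonneg.2 hq0)).symm
    have hmn : (m : ℝ) ≤ (n : ℝ) := by
      have : (q : ℝ) ≤ 1 := by exact_mod_cast hq1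
      rw [hqcast] at this
      calc (m : ℝ) = (m : ℝ) / n * n := by field_simp
        _ ≤ 1 * n := by apply mul_le_mul_of_nonneg_right this (le_of_lt hden)
        _ = n := by ring
    have hSn : 0 ≤ S / n := by positivity
    have hfn : f (S / n) = 1 / n := by
      have h1 : (n : ℝ) * (S / n) = S := by field_simp
      have := hnsmul n (S / n) hSn (by rw [h1])
      rw [h1, hfS] at this
      field_simp
      linarith [this]
    have h2 : (m : ℝ) * (S / n) = (q : ℝ) * S := by rw [hqcast]; ring
    have h3 : (m : ℝ) * (S / n) ≤ S := by
      rw [h2]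
      have : (q : ℝ) ≤ 1 := by exact_mod_cast hq1
      nlinarith
    have := hnsmul m (S / n) hSn h3
    rw [h2] at this
    rw [this, hfn, hqcast]
    ring
  intro a ha haS
  have hfa1 : f a ≤ 1 := by rw [← hfS]; exact hmono a S ha haS le_rfl
  have hfa0 : 0 ≤ f a := h0 a ha haS
  rcases lt_trichotomy (f a) (a / S) with h | h | h
  · exfalso
    obtain ⟨q, hq1, hq2⟩ := exists_rat_btwn h
    have hq0 : (0 : ℝ) ≤ (q : ℝ) := le_of_lt (lt_of_le_of_lt hfa0 hq1)
    have hqle1 : (q : ℝ) ≤ 1 := by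
      have : a / S ≤ 1 := by rw [div_le_one hS]; exact haS
      linarith
    have hfq : f ((q : ℝ) * S) = q := hrat q (by exact_mod_cast hq0) (by exact_mod_cast hqle1)
    have hqa : (q : ℝ) * S ≤ a := by
      rw [lt_div_iff₀ hS] at hq2; linarith
    have := hmono ((q : ℝ) * S) a (by positivity) hqa haS
    rw [hfq] at this
    linarith
  · exact h
  · exfalso
    obtain ⟨q, hq1, hq2⟩ := exists_rat_btwn h
    have hq0 : (0 : ℝ) ≤ (q : ℝ) := by
      have : 0 ≤ a / S := by positivity
      linarith
    have hqle1 : (q : ℝ) ≤ 1 := by linarith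
    have hfq : f ((q : ℝ) * S) = q := hrat q (by exact_mod_cast hq0) (by exact_mod_cast hqle1)
    have haq : a ≤ (q : ℝ) * S := by
      rw [div_lt_iff₀ hS] at hq1; linarith
    have hqS : (q : ℝ) * S ≤ S := by nlinarith
    have := hmono a ((q : ℝ) * S) ha haq hqS
    rw [hfq] at this
    linarith

/-- The two-point vector with value `a` at `i`, `b` at `j`, zero elsewhere. -/
def v2 (i j : N) (a b : ℝ) : N → ℝ :=
  Function.update (Function.update (fun _ => 0) i a) j b

lemma v2_apply_left {i j : N} (hij : i ≠ j) (a b : ℝ) : v2 i j a b i = a := by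
  simp [v2, Function.update_of_ne hij, Function.update_self]

lemma v2_apply_right {i j : N} (a b : ℝ) : v2 i j a b j = b := by
  simp [v2]

lemma v2_apply_other {i j k : N} (hki : k ≠ i) (hkj : k ≠ j) (a b : ℝ) :
    v2 i j a b k = 0 := by
  simp [v2, Function.update_of_ne hkj, Function.update_of_ne hki]

lemma v2_comm {i j : N} (hij : i ≠ j) (a b : ℝ) : v2 i j a b = v2 j i b a := by
  funext k
  by_cases hki : k = i
  · subst hki; rw [v2_apply_left hij, v2_apply_right]
  by_cases hkj : k = j
  · subst hkj; rw [v2_apply_right, v2_apply_left (Ne.symm hij)]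
  · rw [v2_apply_other hki hkj, v2_apply_other hkj hki]

lemma v2_sum {i j : N} (hij : i ≠ j) (a b : ℝ) : ∑ l, v2 i j a b l = a + b := by
  rw [v2, Finset.sum_update_of_mem (Finset.mem_univ j), Finset.sdiff_singleton_eq_erase,
    Finset.sum_update_of_mem (Finset.mem_erase.2 ⟨hij, Finset.mem_univ i⟩)]
  simp [add_comm]

lemma v2_nonneg {i j : N} {a b : ℝ} (ha : 0 ≤ a) (hb : 0 ≤ b) (k : N) :
    0 ≤ v2 i j a b k := by
  by_cases hkj : k = j
  · subst hkj; rw [v2_apply_right]; exact hb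
  rw [v2, Function.update_of_ne hkj]
  by_cases hki : k = i
  · subst hki; rw [Function.update_self]; exact ha
  · rw [Function.update_of_ne hki]

lemma v2_feasible {i j : N} (hij : i ≠ j) {a b : ℝ} (ha : 0 ≤ a) (hb : 0 ≤ b)
    (hab : 0 < a + b) : Feasible (v2 i j a b) :=
  aux_feasible_of_pos_sum (v2_nonneg ha hb) (by rw [v2_sum hij]; exact hab)

/-- NAR allows moving all effort of players other than `i`, `j` onto `j`,
without changing `i`'s winning probability. -/
lemma aux_move_all (c : CSF N) (hNAR : c.NAR) {i j : N} (hij : i ≠ j) :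
    ∀ x : N → ℝ, Feasible x →
      c.P x i = c.P (v2 i j (x i) ((∑ l, x l) - x i)) i := by
  suffices H : ∀ n : ℕ, ∀ x : N → ℝ, Feasible x →
      (((Finset.univ.erase i).erase j).filter (fun k => x k ≠ 0)).card ≤ n →
      c.P x i = c.P (v2 i j (x i) ((∑ l, x l) - x i)) i by
    intro x hx
    exact H _ x hx le_rfl
  have base : ∀ x : N → ℝ, Feasible x →
      (((Finset.univ.erase i).erase j).filter (fun k => x k ≠ 0)).card = 0 →
      x = v2 i j (x i) ((∑ l, x l) - x i) := by
    intro x hx hcard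
    have hzero : ∀ k, k ≠ i → k ≠ j → x k = 0 := by
      intro k hki hkj
      by_contra hk
      have : k ∈ ((Finset.univ.erase i).erase j).filter (fun k => x k ≠ 0) :=
        Finset.mem_filter.2 ⟨Finset.mem_erase.2 ⟨hkj, Finset.mem_erase.2
          ⟨hki, Finset.mem_univ k⟩⟩, hk⟩
      rw [Finset.card_eq_zero] at hcard
      simp [hcard] at this
    have hsum : ∑ l, x l = x i + x j := by
      rw [← Finset.sum_subset (Finset.subset_univ ({i, j} : Finset N))
        (fun k _ hk => hzero k (fun h => hk (by simp [h])) (fun h => hk (by simp [h])))]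
      rw [Finset.sum_pair hij]
    funext k
    by_cases hki : k = i
    · subst hki; rw [v2_apply_left hij]
    by_cases hkj : k = j
    · subst hkj; rw [v2_apply_right, hsum]; ring
    · rw [v2_apply_other hki hkj, hzero k hki hkj]
  intro n
  induction n with
  | zero =>
    intro x hx hcard
    rw [← base x hx (Nat.le_zero.1 hcard)]
  | succ n ih =>
    intro x hx hcard
    rcases Nat.eq_zero_or_pos
        ((((Finset.univ.erase i).erase j).filter (fun k => x k ≠ 0)).card) with h0 | hpos
    · rw [← base x hx h0]
    · obtain ⟨t, ht⟩ := Finset.card_pos.1 hpos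
      obtain ⟨htmem, htne⟩ := Finset.mem_filter.1 ht
      obtain ⟨htj, htmem'⟩ := Finset.mem_erase.1 htmem
      obtain ⟨hti, _⟩ := Finset.mem_erase.1 htmem'
      have htpos : 0 < x t := lt_of_le_of_ne (hx.1 t) (Ne.symm htne)
      set y : N → ℝ := Function.update (Function.update x t 0) j (x t + x j) with hy
      have hyt : y t = 0 := by
        rw [hy, Function.update_of_ne htj, Function.update_self]
      have hyother : ∀ k, k ≠ t → k ≠ j → y k = x k := by
        intro k hkt hkj
        rw [hy, Function.update_of_ne hkj, Function.update_of_ne hkt]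
      have hyi : y i = x i := hyother i (Ne.symm hti) hij
      have hynn : ∀ k, 0 ≤ y k := by
        intro k
        by_cases hkj : k = j
        · subst hkj; rw [hy, Function.update_self]; exact add_nonneg (hx.1 t) (hx.1 _)
        by_cases hkt : k = t
        · subst hkt; rw [hyt]
        · rw [hyother k hkt hkj]; exact hx.1 k
      have hyj : y j = x t + x j := by rw [hy, Function.update_self]
      have hyfeas : Feasible y := by
        refine ⟨hynn, ⟨j, ?_⟩⟩
        rw [hyj]
        have := hx.1 j
        intro hcontra; linarith
      have hysum : ∑ l, y l = ∑ l, x l := by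
        have e1 : ∑ l, x l = x j + ∑ l ∈ Finset.univ.erase j, x l :=
          (Finset.add_sum_erase _ _ (Finset.mem_univ j)).symm
        have e2 : ∑ l ∈ Finset.univ.erase j, x l
            = x t + ∑ l ∈ (Finset.univ.erase j).erase t, x l :=
          (Finset.add_sum_erase _ _ (Finset.mem_erase.2 ⟨htj, Finset.mem_univ t⟩)).symm
        rw [hy, Finset.sum_update_of_mem (Finset.mem_univ j), Finset.sdiff_singleton_eq_erase,
          Finset.sum_update_of_mem (Finset.mem_erase.2 ⟨htj, Finset.mem_univ t⟩),
          Finset.sdiff_singleton_eq_erase, e1, e2]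
        ring
      have hPxy : c.P y i = c.P x i := by
        exact hNAR x hx t j htj 0 (x t + x j) le_rfl
          (add_nonneg (hx.1 t) (hx.1 j)) (by ring) i (Ne.symm hti) hij
      have hycard : (((Finset.univ.erase i).erase j).filter (fun k => y k ≠ 0)).card ≤ n := by
        have hsub : ((Finset.univ.erase i).erase j).filter (fun k => y k ≠ 0) ⊆
            (((Finset.univ.erase i).erase j).filter (fun k => x k ≠ 0)).erase t := by
          intro k hk
          obtain ⟨hkmem, hkne⟩ := Finset.mem_filter.1 hk
          have hkj : k ≠ j := (Finset.mem_erase.1 hkmem).1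
          have hkt : k ≠ t := by rintro rfl; exact hkne hyt
          refine Finset.mem_erase.2 ⟨hkt, Finset.mem_filter.2 ⟨hkmem, ?_⟩⟩
          rwa [hyother k hkt hkj] at hkne
        have := Finset.card_le_card hsub
        rw [Finset.card_erase_of_mem ht] at this
        omega
      have := ih y hyfeas hycard
      rw [hPxy, hyi, hysum] at this
      exact this

/-- The key step: under DC and NAR, the grand-contest CSF is the ratio form. -/
lemma aux_P_formula (hN : 3 ≤ Fintype.card N) (c : CSF N) (hDC : c.DC) (hNAR : c.NAR) :
    ∀ x : N → ℝ, Feasible x → ∀ i : N, c.P x i = x i / ∑ l, x l := by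
  intro x hx i
  set S := ∑ l, x l with hSdef
  have hS : 0 < S := by
    obtain ⟨i₀, hi₀⟩ := hx.2
    exact Finset.sum_pos' (fun l _ => hx.1 l)
      ⟨i₀, Finset.mem_univ i₀, lt_of_le_of_ne (hx.1 i₀) (Ne.symm hi₀)⟩
  obtain ⟨j, hji⟩ : ∃ j, j ≠ i := Fintype.exists_ne_of_one_lt_card (by omega) i
  have hij : i ≠ j := Ne.symm hji
  obtain ⟨k, hk⟩ : ∃ k, k ∈ ({i, j} : Finset N)ᶜ := by
    apply Finset.card_pos.1
    rw [Finset.card_compl]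
    have h2 : ({i, j} : Finset N).card ≤ 2 :=
      le_trans (Finset.card_insert_le _ _) (by simp)
    omega
  rw [Finset.mem_compl] at hk
  have hki : k ≠ i := fun h => hk (by simp [h])
  have hkj : k ≠ j := fun h => hk (by simp [h])
  set Φ : ℝ → ℝ := fun a => c.P (v2 i j a (S - a)) i with hΦdef
  set Ψ : ℝ → ℝ := fun b => c.P (v2 j i b (S - b)) j with hΨdef
  set Θ : ℝ → ℝ := fun t => c.P (v2 k i t (S - t)) k with hΘdef
  have hv2feas : ∀ a, 0 ≤ a → a ≤ S → ∀ (i' j' : N), i' ≠ j' → Feasible (v2 i' j' a (S - a)) :=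
    fun a ha haS i' j' h => v2_feasible h ha (by linarith) (by linarith)
  -- the triple identity
  have triple : ∀ a b, 0 ≤ a → 0 ≤ b → a + b ≤ S → Φ a + Ψ b + Θ (S - a - b) = 1 := by
    intro a b ha hb hab
    set w : N → ℝ := Function.update (v2 i j a b) k (S - a - b) with hwdef
    have hwi : w i = a := by
      rw [hwdef, Function.update_of_ne (Ne.symm hki), v2_apply_left hij]
    have hwj : w j = b := by
      rw [hwdef, Function.update_of_ne (Ne.symm hkj), v2_apply_right]
    have hwk : w k = S - a - b := by rw [hwdef, Function.update_self]
    have hwother : ∀ l, l ≠ i → l ≠ j → l ≠ k → w l = 0 := by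
      intro l h1 h2 h3
      rw [hwdef, Function.update_of_ne h3, v2_apply_other h1 h2]
    have hwnn : ∀ l, 0 ≤ w l := by
      intro l
      by_cases h3 : l = k
      · subst h3; rw [hwk]; linarith
      rw [hwdef, Function.update_of_ne h3]
      exact v2_nonneg ha hb l
    have hwsum : ∑ l, w l = S := by
      rw [hwdef, Finset.sum_update_of_mem (Finset.mem_univ k), Finset.sdiff_singleton_eq_erase,
        Finset.sum_erase _ (v2_apply_other hki hkj a b), v2_sum hij]
      ring
    have hwfeas : Feasible w := aux_feasible_of_pos_sum hwnn (by rw [hwsum]; exact hS)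
    have hPi : c.P w i = Φ a := by
      have := aux_move_all c hNAR hij w hwfeas
      rw [hwsum, hwi] at this
      exact this
    have hPj : c.P w j = Ψ b := by
      have := aux_move_all c hNAR hji w hwfeas
      rw [hwsum, hwj] at this
      exact this
    have hPk : c.P w k = Θ (S - a - b) := by
      have := aux_move_all c hNAR hki w hwfeas
      rw [hwsum, hwk] at this
      exact this
    have hzero : ∀ l, l ∉ ({i, j, k} : Finset N) → c.P w l = 0 := by
      intro l hl
      simp only [Finset.mem_insert, Finset.mem_singleton, not_or] at hl
      exact aux_dummy hN c hDC hwfeas (hwother l hl.1 hl.2.1 hl.2.2)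
    have hsum1 : ∑ l ∈ ({i, j, k} : Finset N), c.P w l = 1 := by
      rw [Finset.sum_subset (Finset.subset_univ _) (fun l _ hl => hzero l hl)]
      exact aux_sumP hN c hwfeas
    have hexp : ∑ l ∈ ({i, j, k} : Finset N), c.P w l = c.P w i + c.P w j + c.P w k := by
      rw [Finset.sum_insert (by simp [hij, hki.symm]), Finset.sum_insert (by simp [hkj.symm]),
        Finset.sum_singleton]
      ring
    rw [hexp, hPi, hPj, hPk] at hsum1
    exact hsum1
  have hΦ0 : Φ 0 = 0 := by
    refine aux_dummy hN c hDC (hv2feas 0 le_rfl hS.le i j hij) ?_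
    rw [v2_apply_left hij]
  have hΨ0 : Ψ 0 = 0 := by
    refine aux_dummy hN c hDC (hv2feas 0 le_rfl hS.le j i hji) ?_
    rw [v2_apply_left hji]
  have hΘ0 : Θ 0 = 0 := by
    refine aux_dummy hN c hDC (hv2feas 0 le_rfl hS.le k i hki) ?_
    rw [v2_apply_left hki]
  have pairΦΘ : ∀ a, 0 ≤ a → a ≤ S → Φ a + Θ (S - a) = 1 := by
    intro a ha haS
    have h := triple a 0 ha le_rfl (by linarith)
    rw [hΨ0, show S - a - 0 = S - a by ring] at h
    linarith
  have pairΨΘ : ∀ b, 0 ≤ b → b ≤ S → Ψ b + Θ (S - b) = 1 := by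
    intro b hb hbS
    have h := triple 0 b le_rfl hb (by linarith)
    rw [hΦ0, show S - 0 - b = S - b by ring] at h
    linarith
  have hΨΦ : ∀ t, 0 ≤ t → t ≤ S → Ψ t = Φ t := by
    intro t ht htS
    have h1 := pairΦΘ t ht htS
    have h2 := pairΨΘ t ht htS
    linarith
  have hadd : ∀ a b, 0 ≤ a → 0 ≤ b → a + b ≤ S → Φ (a + b) = Φ a + Φ b := by
    intro a b ha hb hab
    have h1 := triple a b ha hb hab
    have h2 := pairΦΘ (a + b) (by linarith) hab
    rw [show S - (a + b) = S - a - b by ring] at h2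
    rw [hΨΦ b hb (by linarith)] at h1
    linarith
  have hΦS : Φ S = 1 := by
    have h := pairΦΘ S hS.le le_rfl
    rw [show S - S = 0 by ring, hΘ0] at h
    linarith
  have hΦnn : ∀ a, 0 ≤ a → a ≤ S → 0 ≤ Φ a := by
    intro a ha haS
    exact aux_P_nonneg hN c (hv2feas a ha haS i j hij) i
  have hlin := aux_linear hS Φ hΦnn hadd hΦS
  have hfinal : c.P x i = Φ (x i) := by
    have := aux_move_all c hNAR hij x hx
    rw [← hSdef] at this
    exact this
  rw [hfinal]
  exact hlin (x i) (hx.1 i)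
    (hSdef ▸ Finset.single_le_sum (fun l _ => hx.1 l) (Finset.mem_univ i))

end Aux

/-- SM, LCA, DC and NAR hold iff the CSF is the ratio CSF
`p_i^M(x) = x_i / ∑_{j∈M} x_j`. -/
theorem statement17 {N : Type*} [Fintype N] [DecidableEq N]
    (hN : 3 ≤ Fintype.card N) (c : CSF N) :
    (c.SM ∧ c.LCA ∧ c.DC ∧ c.NAR) ↔
      (∀ M : Finset N, 2 ≤ M.card → ∀ x, FeasibleOn M x → ∀ i ∈ M,
        c.p M x i = x i / ∑ j ∈ M, x j) := by
  have hcardu : 2 ≤ (Finset.univ : Finset N).card := aux_card_univ hN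
  constructor
  · rintro ⟨-, hLCA, hDC, hNAR⟩
    intro M hM x hx i hi
    classical
    obtain ⟨i₀, hi₀M, hi₀⟩ := hx.2
    set y : N → ℝ := fun k => if k ∈ M then x k else 0 with hydef
    have hynn : ∀ k, 0 ≤ y k := by
      intro k
      rw [hydef]
      dsimp only
      split
      · exact hx.1 k
      · exact le_rfl
    have hyM : ∀ l ∈ M, y l = x l := by intro l hl; rw [hydef]; simp [hl]
    have hyfeas : Feasible y := ⟨hynn, ⟨i₀, by rw [hyM i₀ hi₀M]; exact hi₀⟩⟩
    have hSM : 0 < ∑ l ∈ M, x l :=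
      Finset.sum_pos' (fun l _ => hx.1 l)
        ⟨i₀, hi₀M, lt_of_le_of_ne (hx.1 i₀) (Ne.symm hi₀)⟩
    have hysum : ∑ l, y l = ∑ l ∈ M, x l := by
      rw [hydef, Finset.sum_ite_mem, Finset.univ_inter]
    have hP := aux_P_formula hN c hDC hNAR
    have hMy : ∃ l ∈ M, y l ≠ 0 := ⟨i₀, hi₀M, by rw [hyM i₀ hi₀M]; exact hi₀⟩
    have hLCAy := hLCA y hyfeas M hM hMy i hi
    have hsumPy : ∑ l ∈ M, c.P y l = 1 := by
      calc ∑ l ∈ M, c.P y l = ∑ l ∈ M, y l / ∑ l', y l' :=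
            Finset.sum_congr rfl fun l _ => hP y hyfeas l
        _ = (∑ l ∈ M, y l) / ∑ l', y l' := by rw [Finset.sum_div]
        _ = 1 := by
            rw [hysum, Finset.sum_congr rfl hyM]
            exact div_self (ne_of_gt hSM)
    rw [hsumPy, mul_one] at hLCAy
    have hres := c.restrict M hM x y hx (fun l hl => (hyM l hl).symm) i hi
    rw [hres, ← hLCAy, hP y hyfeas i, hysum, hyM i hi]
  · intro hp
    have hPform : ∀ x : N → ℝ, Feasible x → ∀ i : N, c.P x i = x i / ∑ l, x l := by
      intro x hx i
      exact hp Finset.univ hcardu x (aux_feasibleOn_univ hx) i (Finset.mem_univ i)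
    have hSpos : ∀ x : N → ℝ, Feasible x → 0 < ∑ l, x l := by
      intro x hx
      obtain ⟨i₀, hi₀⟩ := hx.2
      exact Finset.sum_pos' (fun l _ => hx.1 l)
        ⟨i₀, Finset.mem_univ i₀, lt_of_le_of_ne (hx.1 i₀) (Ne.symm hi₀)⟩
    refine ⟨?_, ?_, ?_, ?_⟩
    · -- SM
      intro x hx i hPi xi' hlt
      set R := ∑ l ∈ Finset.univ.erase i, x l with hRdef
      have hR0 : 0 ≤ R := Finset.sum_nonneg fun l _ => hx.1 l
      have hSx : ∑ l, x l = x i + R := (Finset.add_sum_erase _ _ (Finset.mem_univ i)).symm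
      have hS : 0 < ∑ l, x l := hSpos x hx
      have hRpos : 0 < R := by
        rw [hPform x hx i] at hPi
        rw [div_lt_one hS] at hPi
        linarith [hSx ▸ hPi]
      have hxi'pos : 0 < xi' := lt_of_le_of_lt (hx.1 i) hlt
      set y := Function.update x i xi' with hydef
      have hynn : ∀ k, 0 ≤ y k := by
        intro k
        by_cases hk : k = i
        · subst hk; rw [hydef, Function.update_self]; exact hxi'pos.le
        · rw [hydef, Function.update_of_ne hk]; exact hx.1 k
      have hyfeas : Feasible y :=
        ⟨hynn, ⟨i, by rw [hydef, Function.update_self]; exact ne_of_gt hxi'pos⟩⟩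
      have hysum : ∑ l, y l = xi' + R := by
        rw [hydef, Finset.sum_update_of_mem (Finset.mem_univ i),
          Finset.sdiff_singleton_eq_erase]
      rw [hPform x hx i, hPform y hyfeas i, hydef, Function.update_self, hysum, hSx]
      rw [div_lt_div_iff₀ (by linarith) (by linarith)]
      nlinarith
    · -- LCA
      intro x hx M hM hMx i hi
      obtain ⟨i₀, hi₀M, hi₀⟩ := hMx
      have hSM : 0 < ∑ l ∈ M, x l :=
        Finset.sum_pos' (fun l _ => hx.1 l)
          ⟨i₀, hi₀M, lt_of_le_of_ne (hx.1 i₀) (Ne.symm hi₀)⟩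
      have hS : 0 < ∑ l, x l := hSpos x hx
      have hsumP : ∑ j ∈ M, c.P x j = (∑ j ∈ M, x j) / ∑ l, x l := by
        rw [Finset.sum_div]
        exact Finset.sum_congr rfl fun l _ => hPform x hx l
      rw [hPform x hx i, hp M hM x ⟨hx.1, ⟨i₀, hi₀M, hi₀⟩⟩ i hi, hsumP]
      field_simp
    · -- DC
      intro x hx i hxi j hji
      have hcard_e : 2 ≤ (Finset.univ.erase i).card := by
        rw [Finset.card_erase_of_mem (Finset.mem_univ i), Finset.card_univ]; omega
      obtain ⟨j₀, hj₀⟩ := hx.2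
      have hj₀i : j₀ ≠ i := by rintro rfl; exact hj₀ hxi
      have hfe : FeasibleOn (Finset.univ.erase i) x :=
        ⟨hx.1, ⟨j₀, Finset.mem_erase.2 ⟨hj₀i, Finset.mem_univ j₀⟩, hj₀⟩⟩
      rw [hPform x hx j,
        hp (Finset.univ.erase i) hcard_e x hfe j (Finset.mem_erase.2 ⟨hji, Finset.mem_univ j⟩)]
      congr 1
      rw [← Finset.add_sum_erase _ _ (Finset.mem_univ i), hxi, zero_add]
    · -- NAR
      intro x hx i j hij xi' xj' h1 h2 hsum k hki hkj
      set y := Function.update (Function.update x i xi') j xj' with hydef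
      have hji : j ≠ i := Ne.symm hij
      have hynn : ∀ l, 0 ≤ y l := by
        intro l
        by_cases hlj : l = j
        · subst hlj; rw [hydef, Function.update_self]; exact h2
        rw [hydef, Function.update_of_ne hlj]
        by_cases hli : l = i
        · subst hli; rw [Function.update_self]; exact h1
        · rw [Function.update_of_ne hli]; exact hx.1 l
      have hysum : ∑ l, y l = ∑ l, x l := by
        have e1 : ∑ l, x l = x j + ∑ l ∈ Finset.univ.erase j, x l :=
          (Finset.add_sum_erase _ _ (Finset.mem_univ j)).symm
        have e2 : ∑ l ∈ Finset.univ.erase j, x l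
            = x i + ∑ l ∈ (Finset.univ.erase j).erase i, x l :=
          (Finset.add_sum_erase _ _ (Finset.mem_erase.2 ⟨hij, Finset.mem_univ i⟩)).symm
        rw [hydef, Finset.sum_update_of_mem (Finset.mem_univ j),
          Finset.sdiff_singleton_eq_erase,
          Finset.sum_update_of_mem (Finset.mem_erase.2 ⟨hij, Finset.mem_univ i⟩),
          Finset.sdiff_singleton_eq_erase, e1, e2]
        linarith
      have hyfeas : Feasible y :=
        aux_feasible_of_pos_sum hynn (by rw [hysum]; exact hSpos x hx)
      have hyk : y k = x k := by
        rw [hydef, Function.update_of_ne hkj, Function.update_of_ne hki]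
      rw [hPform y hyfeas k, hPform x hx k, hyk, hysum]
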